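/- arXiv:1805.08007 — 3 statements merged into one kernel-verified Lean document; each statement's English description precedes it below -/
import Mathlib

section
/- If z ∈ F* (i.e., z ≠ 0, -1/2 ≤ Re(z), Im(z) < 1/2), then the nearest Gaussian integer a = [1/z] satisfies |a| ≥ √2; in particular a ∉ {0, 1, -1, i, -i}. -/
open Complex Filter

/-- `z` is a Gaussian integer (as a complex number). -/
def IsGaussianInt (z : ℂ) : Prop := ∃ m n : ℤ, z = (m : ℂ) + (n : ℂ) * I

/-- `z` belongs to `ℚ(i)`. -/
def IsGaussianRational (z : ℂ) : Prop :=
  ∃ p q : ℂ, IsGaussianInt p ∧ IsGaussianInt q ∧ q ≠ 0 ∧ z = p / q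

/-- The fundamental domain `𝔉`. -/
def InFund (z : ℂ) : Prop :=
  -(1/2) ≤ z.re ∧ z.re < 1/2 ∧ -(1/2) ≤ z.im ∧ z.im < 1/2

/-- Nearest Gaussian integer. -/
noncomputable def nearGauss (z : ℂ) : ℂ :=
  (⌊z.re + 1/2⌋ : ℤ) + (⌊z.im + 1/2⌋ : ℤ) * I

/-- Complete quotients of the Hurwitz continued fraction of `z`. -/
noncomputable def hcfZ (z : ℂ) : ℕ → ℂ
  | 0 => z
  | n + 1 => 1 / (hcfZ z n - nearGauss (hcfZ z n))

/-- Partial quotients of the Hurwitz continued fraction of `z`. -/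
noncomputable def hcfA (z : ℂ) (n : ℕ) : ℂ := nearGauss (hcfZ z n)

/-- Numerators: `hcfP z (n+2) = p n`, with `p (-2) = 0`, `p (-1) = 1`. -/
noncomputable def hcfP (z : ℂ) : ℕ → ℂ
  | 0 => 0
  | 1 => 1
  | n + 2 => hcfA z n * hcfP z (n + 1) + hcfP z n

/-- Denominators: `hcfQ z (n+2) = q n`, with `q (-2) = 1`, `q (-1) = 0`. -/
noncomputable def hcfQ (z : ℂ) : ℕ → ℂ
  | 0 => 1
  | 1 => 0
  | n + 2 => hcfA z n * hcfQ z (n + 1) + hcfQ z n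
/-!
Write `w = 1/z`. For a unit `g`, `|w - g| = |g⁻¹ - z| / |z|`; the square `𝔉` lies in the
Voronoi cell of `0` among the Gaussian integers and in the unit disc, so `|w - g| ≥ 1` for
`g ∈ {0, ±1, ±i}`.
Since `|w - [w]|² ≤ 1/2`, `[w]` is none of these five, and every other Gaussian integer has
norm at least `√2`.
-/

theorem normSq_le_normSq_one_sub_mul_of_inFund {z g : ℂ} (hz : InFund z)
    (hg : g ∈ ({0, 1, -1, I, -I} : Set ℂ)) : normSq z ≤ normSq (1 - g * z) := by
  obtain ⟨hre₁, hre₂, him₁, him₂⟩ := hz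
  rcases hg with rfl | rfl | rfl | rfl | rfl <;>
    simp only [normSq_apply, sub_re, sub_im, mul_re, mul_im, one_re, one_im, zero_re, zero_im,
      neg_re, neg_im, I_re, I_im] <;> nlinarith

theorem one_le_normSq_inv_sub {z g : ℂ} (hz : z ≠ 0) (h : normSq z ≤ normSq (1 - g * z)) :
    1 ≤ normSq (z⁻¹ - g) := by
  have hz' : 0 < normSq z := normSq_pos.mpr hz
  have : z⁻¹ - g = (1 - g * z) / z := by field_simp
  rwa [this, normSq_div, le_div_iff₀ hz', one_mul]

theorem normSq_sub_nearGauss_le (w : ℂ) : normSq (w - nearGauss w) ≤ 1 / 2 := by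
  have hre₁ := Int.floor_le (w.re + 1 / 2)
  have hre₂ := Int.lt_floor_add_one (w.re + 1 / 2)
  have him₁ := Int.floor_le (w.im + 1 / 2)
  have him₂ := Int.lt_floor_add_one (w.im + 1 / 2)
  simp only [nearGauss, normSq_apply, sub_re, sub_im, add_re, add_im, mul_re, mul_im,
    intCast_re, intCast_im, I_re, I_im]
  nlinarith

theorem sqrt_two_le_norm_of_notMem {m n : ℤ}
    (h : (m + n * I : ℂ) ∉ ({0, 1, -1, I, -I} : Set ℂ)) : √2 ≤ ‖(m + n * I : ℂ)‖ := by
  have hnorm : ‖(m + n * I : ℂ)‖ = √(m ^ 2 + n ^ 2) := by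
    rw [norm_def, normSq_apply]; simp [sq]
  rw [hnorm]
  refine Real.sqrt_le_sqrt ?_
  by_contra! hlt
  have hle : m ^ 2 + n ^ 2 ≤ 1 := by
    have : m ^ 2 + n ^ 2 < 2 := by exact_mod_cast hlt
    omega
  have hm : -1 ≤ m ∧ m ≤ 1 := by constructor <;> nlinarith [sq_nonneg n]
  have hn : -1 ≤ n ∧ n ≤ 1 := by constructor <;> nlinarith [sq_nonneg m]
  obtain ⟨hm₁, hm₂⟩ := hm
  obtain ⟨hn₁, hn₂⟩ := hn
  interval_cases m <;> interval_cases n <;> simp at hle h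

/-- for `z ∈ 𝔉*`, the nearest Gaussian integer `a = [1/z]` has `|a| ≥ √2`;
in particular `a ∉ {0, 1, -1, i, -i}`. -/
theorem nearGauss_inv_ge_sqrt_two (z : ℂ) (hz : InFund z) (hz0 : z ≠ 0) :
    Real.sqrt 2 ≤ ‖nearGauss (1 / z)‖ ∧
      nearGauss (1 / z) ∉ ({0, 1, -1, I, -I} : Set ℂ) := by
  have hnotMem : nearGauss (1 / z) ∉ ({0, 1, -1, I, -I} : Set ℂ) := by
    intro hmem
    rw [one_div] at hmem
    have hfar := one_le_normSq_inv_sub hz0 (normSq_le_normSq_one_sub_mul_of_inFund hz hmem)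
    linarith [normSq_sub_nearGauss_le z⁻¹]
  exact ⟨sqrt_two_le_norm_of_notMem hnotMem, hnotMem⟩
end

section
/- Let z ∈ ℂ \ ℚ(i) have Hurwitz continued fraction with Q-pair (p_n), (q_n). Then the sequence of absolute values (|q_n|)_{n≥0} is strictly increasing. -/
open Complex Filter

/-!
Each `z_{n+1}` is the inverse of a nonzero point of the square `|re|, |im| ≤ 1/2`, so it lies
outside the unit disks about `0, ±1, ±i`; hence a Gaussian integer `g` with `|z_{n+1} - g| < 1`
has `|g|² = 2` or `|g|² ≥ 4`. For such `g` we want `|g q_n + q_{n-1}| > |q_n|`. If `|g| ≥ 2` this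
follows from `|q_{n-1}| < |q_n|` by the triangle inequality; if `|g|² = 2` the identity
`|g u + v|² - |u|² = |u + ḡ v|² - |v|²` turns it into `|q_n + ḡ q_{n-1}| > |q_{n-1}|`.
Since `q_n + ḡ q_{n-1} = (a_n + ḡ) q_{n-1} + q_{n-2}`, and the same identity puts `a_n + ḡ` within
distance `1` of `z_n`, the two kinds of inequality are proved together by induction; `g = a_{n+1}`
gives `|q_{n+1}| > |q_n|`.
-/

namespace IsGaussianInt

lemma add {a b : ℂ} (ha : IsGaussianInt a) (hb : IsGaussianInt b) : IsGaussianInt (a + b) := by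
  obtain ⟨m, n, rfl⟩ := ha
  obtain ⟨p, q, rfl⟩ := hb
  exact ⟨m + p, n + q, by push_cast; ring⟩

lemma mul {a b : ℂ} (ha : IsGaussianInt a) (hb : IsGaussianInt b) : IsGaussianInt (a * b) := by
  obtain ⟨m, n, rfl⟩ := ha
  obtain ⟨p, q, rfl⟩ := hb
  exact ⟨m * p - n * q, m * q + n * p, by push_cast; linear_combination (↑n * ↑q : ℂ) * I_sq⟩

lemma conj {a : ℂ} (ha : IsGaussianInt a) : IsGaussianInt (starRingEnd ℂ a) := by
  obtain ⟨m, n, rfl⟩ := ha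
  exact ⟨m, -n, by simp⟩

lemma normSq_eq {a : ℂ} (ha : IsGaussianInt a) :
    ∃ m n : ℤ, normSq a = ((m ^ 2 + n ^ 2 : ℤ) : ℝ) := by
  obtain ⟨m, n, rfl⟩ := ha
  refine ⟨m, n, ?_⟩
  rw [← ofReal_intCast, ← ofReal_intCast, normSq_add_mul_I]
  push_cast
  ring

lemma normSq_eq_two_or_four_le {a : ℂ} (ha : IsGaussianInt a) (h : 2 ≤ normSq a) :
    normSq a = 2 ∨ 4 ≤ normSq a := by
  obtain ⟨m, n, hmn⟩ := ha.normSq_eq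
  rw [hmn] at h ⊢
  norm_cast at h ⊢
  by_contra! hne
  obtain ⟨hm₁, hm₂⟩ : -1 ≤ m ∧ m ≤ 1 := ⟨by nlinarith, by nlinarith⟩
  obtain ⟨hn₁, hn₂⟩ : -1 ≤ n ∧ n ≤ 1 := ⟨by nlinarith, by nlinarith⟩
  interval_cases m <;> interval_cases n <;> simp_all

end IsGaussianInt

lemma isGaussianInt_one : IsGaussianInt 1 := ⟨1, 0, by simp⟩

lemma isGaussianInt_nearGauss (y : ℂ) : IsGaussianInt (nearGauss y) := ⟨_, _, rfl⟩

namespace IsGaussianRational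

lemma of_isGaussianInt {a : ℂ} (ha : IsGaussianInt a) : IsGaussianRational a :=
  ⟨a, 1, ha, isGaussianInt_one, one_ne_zero, (div_one a).symm⟩

lemma add_isGaussianInt {x a : ℂ} (hx : IsGaussianRational x) (ha : IsGaussianInt a) :
    IsGaussianRational (x + a) := by
  obtain ⟨p, q, hp, hq, hq0, rfl⟩ := hx
  exact ⟨p + a * q, q, hp.add (ha.mul hq), hq, hq0, by field_simp⟩

lemma inv {x : ℂ} (hx : IsGaussianRational x) : IsGaussianRational x⁻¹ := by
  obtain ⟨p, q, hp, hq, hq0, rfl⟩ := hx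
  rcases eq_or_ne p 0 with rfl | hp0
  · simpa using of_isGaussianInt ⟨0, 0, by simp⟩
  · exact ⟨q, p, hq, hp, hp0, inv_div p q⟩

end IsGaussianRational

lemma abs_re_sub_nearGauss_le (y : ℂ) : |(y - nearGauss y).re| ≤ 1 / 2 := by
  have h₁ := Int.floor_le (y.re + 1 / 2)
  have h₂ := Int.lt_floor_add_one (y.re + 1 / 2)
  simp only [nearGauss, sub_re, add_re, intCast_re, mul_re, intCast_im, I_re, I_im]
  rw [abs_le]
  constructor <;> linarith

lemma abs_im_sub_nearGauss_le (y : ℂ) : |(y - nearGauss y).im| ≤ 1 / 2 := by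
  have h₁ := Int.floor_le (y.im + 1 / 2)
  have h₂ := Int.lt_floor_add_one (y.im + 1 / 2)
  simp only [nearGauss, sub_im, add_im, intCast_re, mul_im, intCast_im, I_re, I_im]
  rw [abs_le]
  constructor <;> linarith

lemma normSq_le_half_of_abs_le {v : ℂ} (hre : |v.re| ≤ 1 / 2) (him : |v.im| ≤ 1 / 2) :
    normSq v ≤ 1 / 2 := by
  rw [normSq_apply]
  nlinarith [abs_mul_abs_self v.re, abs_mul_abs_self v.im, abs_nonneg v.re, abs_nonneg v.im]

lemma two_le_normSq_of_normSq_inv_sub_lt_one {v g : ℂ} (hv : v ≠ 0) (hre : |v.re| ≤ 1 / 2)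
    (him : |v.im| ≤ 1 / 2) (hg : IsGaussianInt g) (h : normSq (v⁻¹ - g) < 1) :
    2 ≤ normSq g := by
  have hv₀ : 0 < normSq v := normSq_pos.mpr hv
  have hmul : normSq (v⁻¹ - g) * normSq v = normSq (1 - g * v) := by
    rw [← normSq_mul, sub_mul, inv_mul_cancel₀ hv]
  by_contra! hlt
  suffices normSq v ≤ normSq (1 - g * v) by nlinarith
  obtain ⟨m, n, rfl⟩ := hg
  rw [abs_le] at hre him
  have hmn : m ^ 2 + n ^ 2 ≤ 1 := by
    rw [← ofReal_intCast, ← ofReal_intCast, normSq_add_mul_I] at hlt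
    have : m ^ 2 + n ^ 2 < 2 := by exact_mod_cast hlt
    linarith
  obtain ⟨hm₁, hm₂⟩ : -1 ≤ m ∧ m ≤ 1 := ⟨by nlinarith, by nlinarith⟩
  obtain ⟨hn₁, hn₂⟩ : -1 ≤ n ∧ n ≤ 1 := ⟨by nlinarith, by nlinarith⟩
  simp only [normSq_apply, sub_re, sub_im, one_re, one_im, mul_re, mul_im, add_re, add_im,
    intCast_re, intCast_im, I_re, I_im]
  interval_cases m <;> interval_cases n <;> norm_num at hmn
  all_goals (norm_num; nlinarith)

lemma normSq_mul_add_sub_normSq (g u v : ℂ) :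
    normSq (g * u + v) - normSq u =
      normSq (u + starRingEnd ℂ g * v) - normSq v + (normSq g - 2) * (normSq u - normSq v) := by
  simp only [normSq_apply, add_re, add_im, mul_re, mul_im, conj_re, conj_im]
  ring

lemma normSq_lt_normSq_mul_add_of_normSq_eq_two {g u v : ℂ} (hg : normSq g = 2)
    (h : normSq v < normSq (u + starRingEnd ℂ g * v)) : normSq u < normSq (g * u + v) := by
  have := normSq_mul_add_sub_normSq g u v
  rw [hg] at this
  linarith

lemma normSq_lt_normSq_mul_add_of_four_le {g u v : ℂ} (hg : 4 ≤ normSq g)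
    (h : normSq v < normSq u) : normSq u < normSq (g * u + v) := by
  simp only [← Complex.sq_norm] at *
  have hg₂ : 2 ≤ ‖g‖ := by nlinarith [norm_nonneg g]
  have hvu : ‖v‖ < ‖u‖ := lt_of_pow_lt_pow_left₀ 2 (norm_nonneg u) h
  have : ‖u‖ < ‖g * u + v‖ :=
    calc ‖u‖ < 2 * ‖u‖ - ‖v‖ := by linarith
      _ ≤ ‖g‖ * ‖u‖ - ‖v‖ := by gcongr
      _ = ‖g * u‖ - ‖v‖ := by rw [norm_mul]
      _ ≤ ‖g * u + v‖ := norm_sub_le_norm_add _ _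
  gcongr

lemma normSq_sub_conj_lt_one {w c : ℂ} (hw : w ≠ 0) (hc : normSq c = 2)
    (h : normSq (w⁻¹ - c) < 1) : normSq (w - starRingEnd ℂ c) < 1 := by
  have hw₀ : 0 < normSq w := normSq_pos.mpr hw
  have hmul : normSq (w⁻¹ - c) * normSq w = normSq (-c * w + 1) := by
    rw [← normSq_mul, sub_mul, inv_mul_cancel₀ hw]
    ring_nf
  have hid := normSq_mul_add_sub_normSq (-c) w 1
  rw [normSq_neg, hc, map_neg, mul_one, ← sub_eq_add_neg, map_one] at hid
  nlinarith

lemma hcfZ_succ (z : ℂ) (n : ℕ) : hcfZ z (n + 1) = (hcfZ z n - hcfA z n)⁻¹ := by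
  rw [hcfZ, hcfA, one_div]

lemma hcfZ_eq_hcfA_add_inv (z : ℂ) (n : ℕ) : hcfZ z n = hcfA z n + (hcfZ z (n + 1))⁻¹ := by
  rw [hcfZ_succ, inv_inv]
  ring

lemma normSq_hcfZ_sub_hcfA_lt_one (z : ℂ) (n : ℕ) : normSq (hcfZ z n - hcfA z n) < 1 :=
  (normSq_le_half_of_abs_le (abs_re_sub_nearGauss_le _) (abs_im_sub_nearGauss_le _)).trans_lt
    (by norm_num)

section Irrational

variable {z : ℂ}

lemma not_isGaussianRational_hcfZ (hz : ¬ IsGaussianRational z) (n : ℕ) :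
    ¬ IsGaussianRational (hcfZ z n) := by
  induction n with
  | zero => exact hz
  | succ n ih =>
    intro h
    apply ih
    rw [hcfZ_eq_hcfA_add_inv z n, add_comm]
    exact h.inv.add_isGaussianInt (isGaussianInt_nearGauss _)

lemma hcfZ_sub_hcfA_ne_zero (hz : ¬ IsGaussianRational z) (n : ℕ) :
    hcfZ z n - hcfA z n ≠ 0 := by
  intro h
  apply not_isGaussianRational_hcfZ hz n
  rw [sub_eq_zero.mp h]
  exact .of_isGaussianInt (isGaussianInt_nearGauss _)

lemma two_le_normSq_of_normSq_hcfZ_succ_sub_lt_one (hz : ¬ IsGaussianRational z) {n : ℕ}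
    {g : ℂ} (hg : IsGaussianInt g) (h : normSq (hcfZ z (n + 1) - g) < 1) : 2 ≤ normSq g := by
  rw [hcfZ_succ] at h
  exact two_le_normSq_of_normSq_inv_sub_lt_one (hcfZ_sub_hcfA_ne_zero hz n)
    (abs_re_sub_nearGauss_le _) (abs_im_sub_nearGauss_le _) hg h

lemma normSq_hcfZ_sub_hcfA_add_conj_lt_one (hz : ¬ IsGaussianRational z) {n : ℕ} {c : ℂ}
    (hc : normSq c = 2) (h : normSq (hcfZ z (n + 1) - c) < 1) :
    normSq (hcfZ z n - (hcfA z n + starRingEnd ℂ c)) < 1 := by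
  rw [hcfZ_succ] at h
  rw [← sub_sub]
  exact normSq_sub_conj_lt_one (hcfZ_sub_hcfA_ne_zero hz n) hc h

lemma normSq_hcfQ_growth (hz : ¬ IsGaussianRational z) (k : ℕ) :
    normSq (hcfQ z (k + 1)) < normSq (hcfQ z (k + 2)) ∧
      ∀ c, IsGaussianInt c → normSq c = 2 → normSq (hcfZ z (k + 1) - c) < 1 →
        normSq (hcfQ z (k + 1)) < normSq (hcfQ z (k + 2) + starRingEnd ℂ c * hcfQ z (k + 1)) := by
  induction k with
  | zero => simp [hcfQ]
  | succ k ih =>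
    obtain ⟨hlt, hnear⟩ := ih
    have hrec : hcfQ z (k + 3) = hcfA z (k + 1) * hcfQ z (k + 2) + hcfQ z (k + 1) := rfl
    have step : ∀ g, IsGaussianInt g → normSq (hcfZ z (k + 1) - g) < 1 →
        normSq (hcfQ z (k + 2)) < normSq (g * hcfQ z (k + 2) + hcfQ z (k + 1)) := by
      intro g hg hgz
      rcases hg.normSq_eq_two_or_four_le (two_le_normSq_of_normSq_hcfZ_succ_sub_lt_one hz hg hgz)
        with hg₂ | hg₄
      · exact normSq_lt_normSq_mul_add_of_normSq_eq_two hg₂ (hnear g hg hg₂ hgz)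
      · exact normSq_lt_normSq_mul_add_of_four_le hg₄ hlt
    refine ⟨?_, fun c hc hc₂ hcz => ?_⟩
    · rw [hrec]
      exact step _ (isGaussianInt_nearGauss _) (normSq_hcfZ_sub_hcfA_lt_one z (k + 1))
    · have hsum : hcfQ z (k + 3) + starRingEnd ℂ c * hcfQ z (k + 2) =
          (hcfA z (k + 1) + starRingEnd ℂ c) * hcfQ z (k + 2) + hcfQ z (k + 1) := by
        rw [hrec]
        ring
      rw [hsum]
      exact step _ ((isGaussianInt_nearGauss _).add hc.conj)
        (normSq_hcfZ_sub_hcfA_add_conj_lt_one hz hc₂ hcz)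

end Irrational

/-- for `z ∈ ℂ \ ℚ(i)`, the sequence `(|q_n|)_{n ≥ 0}` is strictly
increasing (`q n = hcfQ z (n+2)`). -/
theorem hcf_q_strictMono (z : ℂ) (hz : ¬ IsGaussianRational z) :
    StrictMono (fun n : ℕ => ‖hcfQ z (n + 2)‖) := by
  refine strictMono_nat_of_lt_succ fun n => ?_
  have h := (normSq_hcfQ_growth hz (n + 1)).1
  simp only [← Complex.sq_norm] at h
  exact lt_of_pow_lt_pow_left₀ 2 (norm_nonneg _) h
end

section
/- Every infinite sequence (b_n)_{n≥0} of Gaussian integers with |b_n| ≥ √8 for all n ≥ 1 is the Hurwitz continued fraction of some complex irrational number; i.e., there exists z ∈ ℂ \ ℚ(i) such that the nearest-Gaussian-integer algorithm applied to z produces exactly the partial quotients (b_n)_{n≥0}. -/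
open Complex Filter

/-
With `R = √2 + 1` we have `R + R⁻¹ = √8`. When `R + R⁻¹ ≤ ‖a‖`, the map `w ↦ a + w⁻¹` sends
`{R ≤ ‖w‖}` into itself and contracts it by the factor `R⁻²`, so the finite continued fractions
`b n + 1/(b (n+1) + 1/(⋯ + 1/b (n+k)))` converge as `k → ∞` to tails `t n = b n + (t (n+1))⁻¹`
with `R ≤ ‖t n‖` for `n ≥ 1`. Since `‖t n - b n‖ ≤ R⁻¹ < 1/2`, the nearest Gaussian integer to
`t n` is `b n`, so the Hurwitz algorithm started at `t 0` has complete quotients `t n` and partial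
quotients `b n`. If `t 0 = p / q` with Gaussian integers `p, q`, then `q (t 0 - b 0) ⋯ (t (n-1) - b (n-1))`
is a nonzero Gaussian integer of norm at most `R⁻ⁿ ‖q‖ → 0`, which is absurd.
-/

open Topology

section ContinuedFractionTails

variable {b : ℕ → ℂ} {R : ℝ}

lemma norm_inv_le_inv_of_le {w : ℂ} (hR : 0 < R) (hw : R ≤ ‖w‖) : ‖w⁻¹‖ ≤ R⁻¹ := by
  rw [norm_inv]
  exact inv_anti₀ hR hw

lemma le_norm_add_inv {a w : ℂ} (hR : 0 < R) (ha : R + R⁻¹ ≤ ‖a‖) (hw : R ≤ ‖w‖) :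
    R ≤ ‖a + w⁻¹‖ := by
  have h := norm_sub_norm_le a (-w⁻¹)
  rw [sub_neg_eq_add, norm_neg] at h
  linarith [norm_inv_le_inv_of_le hR hw]

lemma norm_inv_sub_inv_le {u v : ℂ} (hR : 0 < R) (hu : R ≤ ‖u‖) (hv : R ≤ ‖v‖) :
    ‖u⁻¹ - v⁻¹‖ ≤ R⁻¹ ^ 2 * ‖u - v‖ := by
  have hu0 : u ≠ 0 := norm_pos_iff.mp (hR.trans_le hu)
  have hv0 : v ≠ 0 := norm_pos_iff.mp (hR.trans_le hv)
  rw [inv_sub_inv' hu0 hv0, norm_mul, norm_mul, norm_sub_rev v u]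
  calc ‖u⁻¹‖ * ‖u - v‖ * ‖v⁻¹‖ ≤ R⁻¹ * ‖u - v‖ * R⁻¹ := by
        gcongr
        exacts [norm_inv_le_inv_of_le hR hu, norm_inv_le_inv_of_le hR hv]
    _ = R⁻¹ ^ 2 * ‖u - v‖ := by ring

noncomputable def cfTrunc (b : ℕ → ℂ) : ℕ → ℕ → ℂ
  | 0, n => b n
  | k + 1, n => b n + (cfTrunc b k (n + 1))⁻¹

lemma le_norm_cfTrunc (hR : 0 < R) (hb : ∀ n, 1 ≤ n → R + R⁻¹ ≤ ‖b n‖) (k : ℕ) :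
    ∀ n, 1 ≤ n → R ≤ ‖cfTrunc b k n‖ := by
  induction k with
  | zero => exact fun n hn => le_trans (by linarith [inv_pos.2 hR]) (hb n hn)
  | succ k ih => exact fun n hn => le_norm_add_inv hR (hb n hn) (ih (n + 1) (by omega))

lemma norm_cfTrunc_succ_sub_le (hR : 0 < R) (hb : ∀ n, 1 ≤ n → R + R⁻¹ ≤ ‖b n‖) (k n : ℕ) :
    ‖cfTrunc b (k + 1) n - cfTrunc b k n‖ ≤ R⁻¹ * (R⁻¹ ^ 2) ^ k := by
  induction k generalizing n with
  | zero =>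
    simpa [cfTrunc] using norm_inv_le_inv_of_le hR (le_norm_cfTrunc hR hb 0 (n + 1) (by omega))
  | succ k ih =>
    calc ‖cfTrunc b (k + 2) n - cfTrunc b (k + 1) n‖
        = ‖(cfTrunc b (k + 1) (n + 1))⁻¹ - (cfTrunc b k (n + 1))⁻¹‖ := by
          simp only [cfTrunc, add_sub_add_left_eq_sub]
      _ ≤ R⁻¹ ^ 2 * ‖cfTrunc b (k + 1) (n + 1) - cfTrunc b k (n + 1)‖ :=
          norm_inv_sub_inv_le hR (le_norm_cfTrunc hR hb _ _ (by omega))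
            (le_norm_cfTrunc hR hb _ _ (by omega))
      _ ≤ R⁻¹ ^ 2 * (R⁻¹ * (R⁻¹ ^ 2) ^ k) := by gcongr; exact ih (n + 1)
      _ = R⁻¹ * (R⁻¹ ^ 2) ^ (k + 1) := by ring

theorem exists_cf_tails (hR : 1 < R) (hb : ∀ n, 1 ≤ n → R + R⁻¹ ≤ ‖b n‖) :
    ∃ t : ℕ → ℂ, (∀ n, 1 ≤ n → R ≤ ‖t n‖) ∧ ∀ n, t n = b n + (t (n + 1))⁻¹ := by
  have hR0 : 0 < R := one_pos.trans hR
  have hcauchy (n : ℕ) : CauchySeq fun k => cfTrunc b k n := by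
    refine cauchySeq_of_le_geometric (R⁻¹ ^ 2) R⁻¹
      (pow_lt_one₀ (inv_nonneg.2 hR0.le) (inv_lt_one_of_one_lt₀ hR) two_ne_zero) fun k => ?_
    rw [dist_comm, dist_eq_norm]
    exact norm_cfTrunc_succ_sub_le hR0 hb k n
  choose t ht using fun n => cauchySeq_tendsto_of_complete (hcauchy n)
  have ht_norm (n : ℕ) (hn : 1 ≤ n) : R ≤ ‖t n‖ :=
    ge_of_tendsto' (ht n).norm fun k => le_norm_cfTrunc hR0 hb k n hn
  refine ⟨t, ht_norm, fun n => tendsto_nhds_unique ((tendsto_add_atTop_iff_nat 1).2 (ht n)) ?_⟩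
  have ht_ne : t (n + 1) ≠ 0 := norm_pos_iff.mp (hR0.trans_le (ht_norm _ n.succ_pos))
  exact tendsto_const_nhds.add ((ht (n + 1)).inv₀ ht_ne)

end ContinuedFractionTails

section GaussianIntegers

lemma isGaussianInt_iff_mem_range {z : ℂ} :
    IsGaussianInt z ↔ z ∈ GaussianInt.toComplex.range := by
  constructor
  · rintro ⟨m, n, rfl⟩
    exact ⟨⟨m, n⟩, GaussianInt.toComplex_def' m n⟩
  · rintro ⟨x, rfl⟩
    exact ⟨x.re, x.im, GaussianInt.toComplex_def x⟩

variable {z w : ℂ}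

lemma IsGaussianInt.mul_s17 (hz : IsGaussianInt z) (hw : IsGaussianInt w) : IsGaussianInt (z * w) :=
  isGaussianInt_iff_mem_range.2 <|
    Subring.mul_mem _ (isGaussianInt_iff_mem_range.1 hz) (isGaussianInt_iff_mem_range.1 hw)

lemma IsGaussianInt.sub (hz : IsGaussianInt z) (hw : IsGaussianInt w) : IsGaussianInt (z - w) :=
  isGaussianInt_iff_mem_range.2 <|
    Subring.sub_mem _ (isGaussianInt_iff_mem_range.1 hz) (isGaussianInt_iff_mem_range.1 hw)

lemma IsGaussianInt.one_le_norm (hz : IsGaussianInt z) (hz0 : z ≠ 0) : 1 ≤ ‖z‖ := by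
  obtain ⟨x, rfl⟩ := isGaussianInt_iff_mem_range.1 hz
  have hx : x ≠ 0 := by rintro rfl; exact hz0 GaussianInt.toComplex_zero
  rw [← one_le_sq_iff₀ (norm_nonneg _), Complex.sq_norm, ← GaussianInt.intCast_real_norm]
  exact_mod_cast GaussianInt.norm_pos.2 hx

lemma nearGauss_add_of_norm_lt (hz : IsGaussianInt z) (hw : ‖w‖ < 1 / 2) :
    nearGauss (z + w) = z := by
  obtain ⟨m, n, rfl⟩ := hz
  have floor_eq (k : ℤ) (x : ℝ) (hx : |x| ≤ ‖w‖) : ⌊(k : ℝ) + x + 1 / 2⌋ = k := by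
    rw [Int.floor_eq_iff]
    constructor <;> linarith [abs_le.1 hx]
  have hre : ((m : ℂ) + n * I + w).re = m + w.re := by simp
  have him : ((m : ℂ) + n * I + w).im = n + w.im := by simp
  rw [nearGauss, hre, him, floor_eq m w.re (abs_re_le_norm w), floor_eq n w.im (abs_im_le_norm w)]

end GaussianIntegers

section HurwitzExpansion

variable {b t : ℕ → ℂ}

lemma hcfA_eq_of_tails (ht : ∀ n, t n = b n + (t (n + 1))⁻¹)
    (hnear : ∀ n, nearGauss (t n) = b n) (n : ℕ) : hcfA (t 0) n = b n := by
  have hcfZ_eq (n : ℕ) : hcfZ (t 0) n = t n := by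
    induction n with
    | zero => rfl
    | succ n ih => rw [hcfZ, ih, hnear, ht n, add_sub_cancel_left, one_div, inv_inv]
  rw [hcfA, hcfZ_eq, hnear]

lemma exists_small_denominator {R : ℝ} (hR : 0 < R) (hb : ∀ n, IsGaussianInt (b n))
    (ht : ∀ n, t n = b n + (t (n + 1))⁻¹) (ht_norm : ∀ n, 1 ≤ n → R ≤ ‖t n‖)
    {q : ℂ} (hq : IsGaussianInt q) (hq0 : q ≠ 0) (hqt : IsGaussianInt (q * t 0)) (n : ℕ) :
    ∃ d, IsGaussianInt d ∧ d ≠ 0 ∧ IsGaussianInt (d * t n) ∧ ‖d‖ ≤ R⁻¹ ^ n * ‖q‖ := by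
  induction n with
  | zero => exact ⟨q, hq, hq0, hqt, by simp⟩
  | succ n ih =>
    obtain ⟨d, hd, hd0, hdt, hd_le⟩ := ih
    have ht_norm' : R ≤ ‖t (n + 1)‖ := ht_norm _ n.succ_pos
    have ht_ne : t (n + 1) ≠ 0 := norm_pos_iff.mp (hR.trans_le ht_norm')
    have hd' : d * t n - b n * d = d * (t (n + 1))⁻¹ := by rw [ht n]; ring
    refine ⟨d * (t (n + 1))⁻¹, hd' ▸ hdt.sub ((hb n).mul_s17 hd), mul_ne_zero hd0 (inv_ne_zero ht_ne),
      by rwa [inv_mul_cancel_right₀ ht_ne], ?_⟩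
    calc ‖d * (t (n + 1))⁻¹‖ ≤ R⁻¹ ^ n * ‖q‖ * R⁻¹ := by
          rw [norm_mul]
          gcongr
          exact norm_inv_le_inv_of_le hR ht_norm'
      _ = R⁻¹ ^ (n + 1) * ‖q‖ := by ring

theorem not_isGaussianRational_of_tails {R : ℝ} (hR : 1 < R) (hb : ∀ n, IsGaussianInt (b n))
    (ht : ∀ n, t n = b n + (t (n + 1))⁻¹) (ht_norm : ∀ n, 1 ≤ n → R ≤ ‖t n‖) :
    ¬ IsGaussianRational (t 0) := by
  rintro ⟨p, q, hp, hq, hq0, hpq⟩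
  have hqt : IsGaussianInt (q * t 0) := by rwa [hpq, mul_div_cancel₀ _ hq0]
  have hR0 : 0 < R := one_pos.trans hR
  have hdecay : Tendsto (fun n => R⁻¹ ^ n * ‖q‖) atTop (𝓝 0) := by
    simpa using (tendsto_pow_atTop_nhds_zero_of_lt_one (inv_nonneg.2 hR0.le)
      (inv_lt_one_of_one_lt₀ hR)).mul_const ‖q‖
  obtain ⟨n, hn⟩ := (hdecay.eventually (gt_mem_nhds one_pos)).exists
  obtain ⟨d, hd, hd0, -, hd_le⟩ := exists_small_denominator hR0 hb ht ht_norm hq hq0 hqt n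
  linarith [hd.one_le_norm hd0]

end HurwitzExpansion

lemma sqrt_two_add_one_inv : (√2 + 1)⁻¹ = √2 - 1 :=
  inv_eq_of_mul_eq_one_right <| by nlinarith [Real.mul_self_sqrt (zero_le_two : (0 : ℝ) ≤ 2)]

lemma sqrt_two_add_one_add_inv : √2 + 1 + (√2 + 1)⁻¹ = √8 := by
  rw [sqrt_two_add_one_inv, eq_comm, Real.sqrt_eq_iff_mul_self_eq (by norm_num) (by linarith [Real.sqrt_nonneg 2])]
  nlinarith [Real.mul_self_sqrt (zero_le_two : (0 : ℝ) ≤ 2)]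

lemma sqrt_two_add_one_inv_lt_half : (√2 + 1)⁻¹ < 1 / 2 := by
  rw [sqrt_two_add_one_inv]
  nlinarith [Real.mul_self_sqrt (zero_le_two : (0 : ℝ) ≤ 2), Real.sqrt_nonneg 2]

/-- every sequence of Gaussian integers `(b_n)_{n≥0}` with `|b_n| ≥ √8`
for all `n ≥ 1` is the Hurwitz continued fraction of some complex irrational. -/
theorem valid_sequences (b : ℕ → ℂ) (hb : ∀ n, IsGaussianInt (b n))
    (hbig : ∀ n : ℕ, 1 ≤ n → Real.sqrt 8 ≤ ‖b n‖) :
    ∃ z : ℂ, ¬ IsGaussianRational z ∧ ∀ n : ℕ, hcfA z n = b n := by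
  have hR : 1 < √2 + 1 := by linarith [Real.sqrt_pos.2 (zero_lt_two : (0 : ℝ) < 2)]
  obtain ⟨t, ht_norm, ht⟩ :=
    exists_cf_tails hR (by simpa only [sqrt_two_add_one_add_inv] using hbig)
  have hnear (n : ℕ) : nearGauss (t n) = b n := by
    rw [ht n]
    refine nearGauss_add_of_norm_lt (hb n) ?_
    calc ‖(t (n + 1))⁻¹‖ ≤ (√2 + 1)⁻¹ :=
          norm_inv_le_inv_of_le (by positivity) (ht_norm _ n.succ_pos)
      _ < 1 / 2 := sqrt_two_add_one_inv_lt_half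
  exact ⟨t 0, not_isGaussianRational_of_tails hR hb ht ht_norm, hcfA_eq_of_tails ht hnear⟩
end
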